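/- Let n ≥ 1, let U ⊆ ℝⁿ be open, and let v : ℝⁿ → ℝ be three times continuously differentiable on U. Then at every point of U, S₂(D²v) = (1/2)·div( S²_{ij}(D²v)·∂_j v ), i.e. S₂(D²v) = (1/2)·∑_{i=1}^{n} ∂_i ( ∑_{j=1}^{n} ((Δv)·δ_{ij} − v_{ij})·v_j ), where S₂(D²v) = ((Δv)² − ∑_{i,j} v_{ij}²)/2. -/

import Mathlib

/-!
Writing `Gᵢ = ∑ⱼ S²ᵢⱼ vⱼ = Δv·vᵢ − ∑ⱼ vᵢⱼ vⱼ`, the product rule gives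
`∂ᵢGᵢ = ∂ᵢ(Δv)·vᵢ + Δv·vᵢᵢ − ∑ⱼ vᵢᵢⱼ vⱼ − ∑ⱼ vᵢⱼ²`, where the symmetry of second and
third derivatives of a `C³` function has been used. Summing over `i`, the two third-order
terms are both `∇(Δv)·∇v` and cancel, leaving `(Δv)² − |D²v|² = 2 S₂(D²v)`.
-/

/-- Partial derivative `∂_i f` of a function on `ℝⁿ`. -/
noncomputable def pd {n : ℕ} (i : Fin n) (f : (Fin n → ℝ) → ℝ) (x : Fin n → ℝ) : ℝ :=
  fderiv ℝ f x (Pi.single i 1)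

/-- Laplacian `Δf = ∑ᵢ ∂ᵢᵢ f`. -/
noncomputable def lap {n : ℕ} (f : (Fin n → ℝ) → ℝ) (x : Fin n → ℝ) : ℝ :=
  ∑ i, pd i (pd i f) x

/-- `S²_{ij}(D²v) = (Δv)·δ_{ij} − ∂_{ij}v`. -/
noncomputable def S2ij {n : ℕ} (v : (Fin n → ℝ) → ℝ) (i j : Fin n) (x : Fin n → ℝ) : ℝ :=
  lap v x * (if i = j then 1 else 0) - pd j (pd i v) x

/-- `S₂(D²v) = ((Δv)² − ∑_{i,j} v_{ij}²)/2`, the sum of the principal 2×2 minors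
of the Hessian. -/
noncomputable def S2H {n : ℕ} (v : (Fin n → ℝ) → ℝ) (x : Fin n → ℝ) : ℝ :=
  ((lap v x) ^ 2 - ∑ i, ∑ j, (pd j (pd i v) x) ^ 2) / 2

section PartialDerivative

variable {n : ℕ} {f g : (Fin n → ℝ) → ℝ} {x : Fin n → ℝ}

lemma pd_sub (hf : DifferentiableAt ℝ f x) (hg : DifferentiableAt ℝ g x) (i : Fin n) :
    pd i (fun y => f y - g y) x = pd i f x - pd i g x := by
  simp only [pd, fderiv_fun_sub hf hg, sub_apply]

lemma pd_mul (hf : DifferentiableAt ℝ f x) (hg : DifferentiableAt ℝ g x) (i : Fin n) :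
    pd i (fun y => f y * g y) x = pd i f x * g x + f x * pd i g x := by
  simp only [pd, fderiv_fun_mul hf hg, add_apply, smul_apply, smul_eq_mul]
  ring

lemma pd_sum {ι : Type*} (s : Finset ι) {F : ι → (Fin n → ℝ) → ℝ}
    (hF : ∀ j ∈ s, DifferentiableAt ℝ (F j) x) (i : Fin n) :
    pd i (fun y => ∑ j ∈ s, F j y) x = ∑ j ∈ s, pd i (F j) x := by
  simp only [pd, fderiv_fun_sum hF, sum_apply]

lemma pd_pd_eq_fderiv_fderiv (hf : DifferentiableAt ℝ (fderiv ℝ f) x) (i j : Fin n) :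
    pd j (pd i f) x = fderiv ℝ (fderiv ℝ f) x (Pi.single j 1) (Pi.single i 1) := by
  unfold pd
  rw [fderiv_clm_apply hf (differentiableAt_const _)]
  simp

lemma contDiffAt_pd {m k : WithTop ℕ∞} (hf : ContDiffAt ℝ k f x) (hmk : m + 1 ≤ k)
    (i : Fin n) :
    ContDiffAt ℝ m (pd i f) x :=
  (hf.fderiv_right hmk).clm_apply contDiffAt_const

lemma differentiableAt_pd (hf : ContDiffAt ℝ 2 f x) (i : Fin n) :
    DifferentiableAt ℝ (pd i f) x :=
  (contDiffAt_pd (m := 1) hf le_rfl i).differentiableAt one_ne_zero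

lemma pd_comm (hf : ContDiffAt ℝ 2 f x) (i j : Fin n) :
    pd j (pd i f) x = pd i (pd j f) x := by
  have hdf : DifferentiableAt ℝ (fderiv ℝ f) x :=
    (hf.fderiv_right (m := 1) le_rfl).differentiableAt one_ne_zero
  have hsymm : IsSymmSndFDerivAt ℝ f x :=
    hf.isSymmSndFDerivAt (by simp [minSmoothness_of_isRCLikeNormedField])
  rw [pd_pd_eq_fderiv_fderiv hdf, pd_pd_eq_fderiv_fderiv hdf, hsymm]

end PartialDerivative

section DivergenceForm

variable {n : ℕ} {v : (Fin n → ℝ) → ℝ} {x : Fin n → ℝ}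

lemma sum_S2ij_mul_pd (v : (Fin n → ℝ) → ℝ) (i : Fin n) (y : Fin n → ℝ) :
    ∑ j, S2ij v i j y * pd j v y = lap v y * pd i v y - ∑ j, pd j (pd i v) y * pd j v y := by
  simp [S2ij, sub_mul, Finset.sum_sub_distrib, ite_mul]

lemma differentiableAt_pd_pd (hv : ContDiffAt ℝ 3 v x) (i j : Fin n) :
    DifferentiableAt ℝ (pd j (pd i v)) x :=
  differentiableAt_pd (contDiffAt_pd hv (by norm_num) i) j

lemma pd_lap (hv : ContDiffAt ℝ 3 v x) (j : Fin n) :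
    pd j (lap v) x = ∑ i, pd j (pd i (pd i v)) x :=
  pd_sum Finset.univ (fun i _ => differentiableAt_pd_pd hv i i) j

lemma pd_sum_S2ij_mul_pd (hv : ContDiffAt ℝ 3 v x) (i : Fin n) :
    pd i (fun y => ∑ j, S2ij v i j y * pd j v y) x =
      pd i (lap v) x * pd i v x + lap v x * pd i (pd i v) x
        - ∑ j, (pd j (pd i (pd i v)) x * pd j v x + pd j (pd i v) x ^ 2) := by
  have hv₂ : ContDiffAt ℝ 2 v x := hv.of_le (by norm_num)
  have dv : ∀ k, DifferentiableAt ℝ (pd k v) x := differentiableAt_pd hv₂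
  have dlap : DifferentiableAt ℝ (lap v) x :=
    DifferentiableAt.fun_sum fun k _ => differentiableAt_pd_pd hv k k
  have dterm : ∀ j ∈ Finset.univ,
      DifferentiableAt ℝ (fun y => pd j (pd i v) y * pd j v y) x :=
    fun j _ => (differentiableAt_pd_pd hv i j).mul (dv j)
  simp only [sum_S2ij_mul_pd]
  rw [pd_sub (f := fun y => lap v y * pd i v y) (dlap.mul (dv i)) (.fun_sum dterm),
    pd_mul dlap (dv i), pd_sum _ dterm]
  congr 1
  refine Finset.sum_congr rfl fun j _ => ?_
  rw [pd_mul (differentiableAt_pd_pd hv i j) (dv j), sq, pd_comm hv₂ i j,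
    pd_comm (contDiffAt_pd hv (by norm_num) i) j i]

end DivergenceForm

theorem stmt_3_general (n : ℕ) (U : Set (Fin n → ℝ)) (hU : IsOpen U)
    (v : (Fin n → ℝ) → ℝ) (hv : ContDiffOn ℝ 3 v U)
    (x : Fin n → ℝ) (hx : x ∈ U) :
    S2H v x = (1 / 2) * ∑ i, pd i (fun y => ∑ j, S2ij v i j y * pd j v y) x := by
  have hvx : ContDiffAt ℝ 3 v x := hv.contDiffAt (hU.mem_nhds hx)
  have third_order : ∑ i, ∑ j, pd j (pd i (pd i v)) x * pd j v x
      = ∑ j, pd j (lap v) x * pd j v x := by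
    rw [Finset.sum_comm]
    simp only [← Finset.sum_mul, pd_lap hvx]
  simp only [pd_sum_S2ij_mul_pd hvx, Finset.sum_sub_distrib, Finset.sum_add_distrib,
    ← Finset.mul_sum, third_order]
  simp only [S2H, lap]
  ring

/-- `S₂(D²v) = (1/2)·div(S²_{ij}(D²v)·∂ⱼv)` on `U`. -/
theorem stmt_3 (n : ℕ) (hn : 1 ≤ n) (U : Set (Fin n → ℝ)) (hU : IsOpen U)
    (v : (Fin n → ℝ) → ℝ) (hv : ContDiffOn ℝ 3 v U)
    (x : Fin n → ℝ) (hx : x ∈ U) :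
    S2H v x = (1 / 2) * ∑ i, pd i (fun y => ∑ j, S2ij v i j y * pd j v y) x :=
  stmt_3_general n U hU v hv x hx
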